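/- arXiv:1808.10684 — 2 statements merged into one kernel-verified Lean document; each statement's English description precedes it below -/
import Mathlib

section
/- Let T be an m × m integer matrix with det T ≠ 0 having an eigenvalue of absolute value ≠ 1. Let G = G(m,T) be the ascending HNN-extension ⟨a₁,…,a_m,t | [aᵢ,aⱼ]=1, t a^u t⁻¹ = a^{Tu}⟩ and X = {a₁,…,a_m,t}. Then there exists α > 1 such that for all sufficiently large n, the elliptic subgroup A(m,T) = ker(τ) satisfies |A(m,T) ∩ B_X(n)| ≥ α^n; i.e., A(m,T) has exponential growth in G(m,T). -/
noncomputable section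

/-- Ball of radius `n` in the word metric with respect to a generating set `Y`. -/
def wordBall {G : Type*} [Group G] (Y : Set G) (n : ℕ) : Set G :=
  {g | ∃ l : List G, (∀ x ∈ l, x ∈ Y ∨ x⁻¹ ∈ Y) ∧ l.length ≤ n ∧ l.prod = g}

/-- Relations of the ascending HNN-extension `G(m,T)`. -/
def gmtRels (m : ℕ) (T : Matrix (Fin m) (Fin m) ℤ) : Set (FreeGroup (Fin m ⊕ Unit)) :=
  {r | (∃ i j : Fin m,
          r = FreeGroup.of (Sum.inl i) * FreeGroup.of (Sum.inl j) *
              (FreeGroup.of (Sum.inl i))⁻¹ * (FreeGroup.of (Sum.inl j))⁻¹) ∨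
       (∃ i : Fin m,
          r = FreeGroup.of (Sum.inr ()) * FreeGroup.of (Sum.inl i) *
              (FreeGroup.of (Sum.inr ()))⁻¹ *
              ((List.ofFn fun j : Fin m => FreeGroup.of (Sum.inl j) ^ (T j i)).prod)⁻¹)}

/-- The ascending HNN-extension `G(m,T)` of `ℤ^m` determined by `T`. -/
abbrev GmT (m : ℕ) (T : Matrix (Fin m) (Fin m) ℤ) : Type := PresentedGroup (gmtRels m T)

def gmtA (m : ℕ) (T : Matrix (Fin m) (Fin m) ℤ) (i : Fin m) : GmT m T :=
  PresentedGroup.of (Sum.inl i)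

def gmtT (m : ℕ) (T : Matrix (Fin m) (Fin m) ℤ) : GmT m T :=
  PresentedGroup.of (Sum.inr ())

/-- `a^u = a₁^{u₁} ⋯ a_m^{u_m}`. -/
def gmtAProd (m : ℕ) (T : Matrix (Fin m) (Fin m) ℤ) (u : Fin m → ℤ) : GmT m T :=
  (List.ofFn fun i => gmtA m T i ^ (u i)).prod

lemma gmtTauAux (m : ℕ) (T : Matrix (Fin m) (Fin m) ℤ) :
    ∀ r ∈ gmtRels m T,
      (FreeGroup.lift (Sum.elim (fun _ : Fin m => (1 : Multiplicative ℤ))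
        (fun _ : Unit => Multiplicative.ofAdd 1))) r = 1 := by
  rintro r (⟨i, j, rfl⟩ | ⟨i, rfl⟩) <;>
    simp [map_mul, map_inv, map_list_prod, List.map_ofFn, Function.comp, map_zpow,
      List.prod_ofFn]

/-- The `t`-exponent homomorphism `τ`. -/
def gmtTau (m : ℕ) (T : Matrix (Fin m) (Fin m) ℤ) : GmT m T →* Multiplicative ℤ :=
  PresentedGroup.toGroup (gmtTauAux m T)

/-- The elliptic subgroup `A(m,T) = ker τ`. -/
def gmtElliptic (m : ℕ) (T : Matrix (Fin m) (Fin m) ℤ) : Subgroup (GmT m T) :=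
  (gmtTau m T).ker

/-!
Since `|det T| ≥ 1` is the product of the absolute values of the eigenvalues of `T`, some
eigenvalue `λ` has `|λ| > 1`. A left eigenvector `w` of `T` for `λ` gives an affine action of
`G(m,T)` on `ℂ` in which `aᵢ` translates by `wᵢ` and `t` multiplies by `λ`. Fix `s` with
`|λ|^s ≥ 2` and `j` with `w_j ≠ 0`. For each binary word `b` of length `k`, the element
`a_j^{b₀} t^s a_j^{b₁} t^s ⋯ a_j^{b_{k-1}} t^{-s(k-1)}` lies in `A(m,T)`, has length at most
`(2s+1)k`, and acts as translation by `w_j ∑ bᵢ λ^{si}`. As `|λ^s| ≥ 2`, these binary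
expansions are pairwise distinct, so `|A(m,T) ∩ B_X((2s+1)k)| ≥ 2^k`.
-/

open Matrix

lemma exists_one_lt_pow_le_of_two_pow_le {f : ℕ → ℕ} (hf : Monotone f) {K : ℕ} (hK : 0 < K)
    (h : ∀ k, 2 ^ k ≤ f (K * k)) : ∃ α : ℝ, 1 < α ∧ ∃ N : ℕ, ∀ n ≥ N, α ^ n ≤ (f n : ℝ) := by
  set α : ℝ := 2 ^ (((2 * K : ℕ) : ℝ)⁻¹)
  have hα : α ^ (2 * K) = 2 := Real.rpow_inv_natCast_pow (by norm_num) (by omega)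
  have hα1 : 1 < α := Real.one_lt_rpow (by norm_num) (by positivity)
  refine ⟨α, hα1, K, fun n hn => ?_⟩
  set k := n / K
  have hk : 1 ≤ k := (Nat.le_div_iff_mul_le hK).mpr (by omega)
  have hnk : n ≤ 2 * K * k := by
    have : n < K * (k + 1) := Nat.lt_mul_div_succ n hK
    nlinarith
  calc α ^ n ≤ α ^ (2 * K * k) := pow_le_pow_right₀ hα1.le hnk
    _ = 2 ^ k := by rw [pow_mul, hα]
    _ ≤ f (K * k) := by exact_mod_cast h k
    _ ≤ f n := by exact_mod_cast hf (Nat.mul_div_le n K)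

section WordBall

variable {G : Type*} [Group G] {Y : Set G}

lemma one_mem_wordBall (n : ℕ) : (1 : G) ∈ wordBall Y n :=
  ⟨[], by simp, by simp, rfl⟩

lemma mem_wordBall_one {y : G} (hy : y ∈ Y) : y ∈ wordBall Y 1 :=
  ⟨[y], by simp [hy], by simp, by simp⟩

lemma wordBall_mono {n n' : ℕ} (h : n ≤ n') : wordBall Y n ⊆ wordBall Y n' := by
  rintro g ⟨l, hl, hlen, rfl⟩
  exact ⟨l, hl, hlen.trans h, rfl⟩

lemma mul_mem_wordBall {g h : G} {n n' : ℕ} (hg : g ∈ wordBall Y n) (hh : h ∈ wordBall Y n') :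
    g * h ∈ wordBall Y (n + n') := by
  obtain ⟨l, hl, hlen, rfl⟩ := hg
  obtain ⟨l', hl', hlen', rfl⟩ := hh
  refine ⟨l ++ l', ?_, by simp only [List.length_append]; omega, List.prod_append⟩
  simpa only [List.mem_append, or_imp, forall_and] using ⟨hl, hl'⟩

lemma inv_mem_wordBall {g : G} {n : ℕ} (hg : g ∈ wordBall Y n) : g⁻¹ ∈ wordBall Y n := by
  obtain ⟨l, hl, hlen, rfl⟩ := hg
  refine ⟨(l.map (·⁻¹)).reverse, ?_, by simpa using hlen, (List.prod_inv_reverse l).symm⟩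
  intro x hx
  simpa [or_comm] using hl x⁻¹ (by simpa using hx)

lemma pow_mem_wordBall {g : G} {n : ℕ} (hg : g ∈ wordBall Y n) (k : ℕ) :
    g ^ k ∈ wordBall Y (n * k) := by
  induction k with
  | zero => simpa using one_mem_wordBall (Y := Y) 0
  | succ k ih => rw [pow_succ, Nat.mul_succ]; exact mul_mem_wordBall ih hg

lemma wordBall_finite (hY : Y.Finite) (n : ℕ) : (wordBall Y n).Finite := by
  have : Finite ↥(Y ∪ Y⁻¹) := (hY.union hY.inv).to_subtype
  refine ((List.finite_length_le ↥(Y ∪ Y⁻¹) n).image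
    fun l => (l.map Subtype.val).prod).subset ?_
  rintro g ⟨l, hl, hlen, rfl⟩
  lift l to List ↥(Y ∪ Y⁻¹) using hl
  exact ⟨l, by simpa using hlen, rfl⟩

lemma monotone_ncard_inter_wordBall (S : Set G) (hY : Y.Finite) :
    Monotone fun n => (S ∩ wordBall Y n).ncard := fun _ _ h =>
  Set.ncard_le_ncard (Set.inter_subset_inter_right _ (wordBall_mono h))
    ((wordBall_finite hY _).subset Set.inter_subset_right)

end WordBall

section Digits

variable {K : Type*} [NormedDivisionRing K] {μ : K}

lemma one_le_norm_ofDigits_sub (hμ : 2 ≤ ‖μ‖) :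
    ∀ {bs cs : List Bool}, bs.length = cs.length → bs ≠ cs →
      1 ≤ ‖Nat.ofDigits μ (bs.map Bool.toNat) - Nat.ofDigits μ (cs.map Bool.toNat)‖
  | [], [], _, hne => absurd rfl hne
  | b :: bs, c :: cs, hlen, hne => by
    have hdigit : ‖(b.toNat : K) - c.toNat‖ ≤ 1 := by cases b <;> cases c <;> simp
    simp only [List.map_cons, Nat.ofDigits]
    rw [add_sub_add_comm, ← mul_sub]
    by_cases hbs : bs = cs
    · subst hbs
      have hbc : b ≠ c := by rintro rfl; exact hne rfl
      cases b <;> cases c <;> simp_all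
    · have htail := one_le_norm_ofDigits_sub hμ (by simpa using hlen) hbs
      have hhigh : 2 ≤ ‖μ * (Nat.ofDigits μ (bs.map Bool.toNat) -
          Nat.ofDigits μ (cs.map Bool.toNat))‖ := by
        rw [norm_mul]; nlinarith
      have := norm_sub_norm_le (μ * (Nat.ofDigits μ (bs.map Bool.toNat) -
          Nat.ofDigits μ (cs.map Bool.toNat))) (-((b.toNat : K) - c.toNat))
      rw [norm_neg, sub_neg_eq_add, add_comm] at this
      linarith

lemma ofDigits_map_toNat_injective (hμ : 2 ≤ ‖μ‖) {bs cs : List Bool}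
    (hlen : bs.length = cs.length)
    (h : Nat.ofDigits μ (bs.map Bool.toNat) = Nat.ofDigits μ (cs.map Bool.toNat)) : bs = cs := by
  by_contra hne
  have := one_le_norm_ofDigits_sub hμ hlen hne
  rw [h, sub_self, norm_zero] at this
  norm_num at this

end Digits

lemma Multiset.exists_one_lt_norm_of_one_le_norm_prod {K : Type*} [NormedField K]
    {s : Multiset K} (hs : 1 ≤ ‖s.prod‖) {z : K} (hz : z ∈ s) (hz1 : ‖z‖ < 1) :
    ∃ y ∈ s, 1 < ‖y‖ := by
  classical
  by_contra! hle
  have hrest : ‖(s.erase z).prod‖₊ ≤ 1 := by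
    rw [show ‖(s.erase z).prod‖₊ = ((s.erase z).map nnnorm).prod from
      map_multiset_prod nnnormHom _]
    simpa using Multiset.prod_le_pow_card ((s.erase z).map nnnorm) 1 (by
      simpa [← NNReal.coe_le_one] using fun y hy => hle y (Multiset.mem_of_mem_erase hy))
  rw [← Multiset.cons_erase hz, Multiset.prod_cons, norm_mul] at hs
  have : ‖(s.erase z).prod‖ ≤ 1 := hrest
  nlinarith [norm_nonneg z]

section Eigen

variable {n : Type*} [Fintype n] [DecidableEq n]

lemma Matrix.exists_one_lt_norm_mem_roots_charpoly {M : Matrix n n ℂ} (hdet : 1 ≤ ‖M.det‖)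
    (hev : ∃ z ∈ M.charpoly.roots, ‖z‖ ≠ 1) : ∃ z ∈ M.charpoly.roots, 1 < ‖z‖ := by
  obtain ⟨z, hz, hz1⟩ := hev
  rcases hz1.lt_or_gt with hlt | hgt
  · rw [M.det_eq_prod_roots_charpoly] at hdet
    exact Multiset.exists_one_lt_norm_of_one_le_norm_prod hdet hz hlt
  · exact ⟨z, hz, hgt⟩

lemma Matrix.exists_vecMul_eq_smul_of_mem_roots_charpoly {K : Type*} [Field K] {M : Matrix n n K}
    {μ : K} (hμ : μ ∈ M.charpoly.roots) : ∃ w ≠ 0, w ᵥ* M = μ • w := by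
  have hroot : (scalar n μ - M).det = 0 := by
    rw [← eval_charpoly]; exact (Polynomial.mem_roots M.charpoly_monic.ne_zero).mp hμ
  obtain ⟨w, hw0, hw⟩ := exists_vecMul_eq_zero_iff.mpr hroot
  refine ⟨w, hw0, ?_⟩
  rw [vecMul_sub, sub_eq_zero] at hw
  simpa using hw.symm

end Eigen

lemma MulAction.toPerm_mul_constVAdd_mul_inv {M V : Type*} [Group M] [AddGroup V]
    [DistribMulAction M V] (u : M) (c : V) :
    MulAction.toPerm u * Equiv.constVAdd V c * (MulAction.toPerm u)⁻¹ =
      Equiv.constVAdd V (u • c) := by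
  ext z
  simp [smul_add]

lemma Equiv.constVAdd_pow {V : Type*} [AddGroup V] (v : V) (n : ℕ) :
    Equiv.constVAdd V v ^ n = Equiv.constVAdd V (n • v) :=
  (map_pow (Equiv.constVAddHom V V) (.ofAdd v) n).symm

lemma Equiv.constVAdd_zpow {V : Type*} [AddGroup V] (v : V) (n : ℤ) :
    Equiv.constVAdd V v ^ n = Equiv.constVAdd V (n • v) :=
  (map_zpow (Equiv.constVAddHom V V) (.ofAdd v) n).symm

lemma MulAction.toPerm_pow {M α : Type*} [Group M] [MulAction M α] (u : M) (n : ℕ) :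
    (MulAction.toPerm u : Equiv.Perm α) ^ n = MulAction.toPerm (u ^ n) :=
  (map_pow (MulAction.toPermHom M α) u n).symm

lemma Equiv.prod_ofFn_constVAdd_zpow {V : Type*} [AddCommGroup V] {k : ℕ} (v : Fin k → V)
    (n : Fin k → ℤ) :
    (List.ofFn fun j => Equiv.constVAdd V (v j) ^ n j).prod =
      Equiv.constVAdd V (∑ j, n j • v j) := by
  have := map_list_prod (Equiv.constVAddHom V V) (List.ofFn fun j => .ofAdd (n j • v j))
  rw [List.prod_ofFn, List.map_ofFn] at this
  simpa [Equiv.constVAdd_zpow, Function.comp_def, ← ofAdd_sum, Equiv.constVAddHom] using this.symm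

section AffineRepresentation

variable {m : ℕ} {T : Matrix (Fin m) (Fin m) ℤ} {K : Type*} [CommRing K] {w : Fin m → K}
  {μ : Kˣ}

def gmtAffineGens (w : Fin m → K) (μ : Kˣ) : Fin m ⊕ Unit → Equiv.Perm K :=
  Sum.elim (fun i => Equiv.constVAdd K (w i)) fun _ => MulAction.toPerm μ

lemma lift_gmtAffineGens_eq_one (hw : w ᵥ* T.map Int.cast = (μ : K) • w) :
    ∀ r ∈ gmtRels m T, FreeGroup.lift (gmtAffineGens w μ) r = 1 := by
  rintro r (⟨i, j, rfl⟩ | ⟨i, rfl⟩)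
  · simp only [map_mul, map_inv, FreeGroup.lift_apply_of, gmtAffineGens, Sum.elim_inl]
    rw [mul_inv_eq_one, mul_inv_eq_iff_eq_mul, ← Equiv.constVAdd_add, ← Equiv.constVAdd_add,
      add_comm]
  · simp only [map_mul, map_inv, map_list_prod, List.map_ofFn, Function.comp_def, map_zpow,
      FreeGroup.lift_apply_of, gmtAffineGens, Sum.elim_inl, Sum.elim_inr,
      MulAction.toPerm_mul_constVAdd_mul_inv, Equiv.prod_ofFn_constVAdd_zpow]
    rw [mul_inv_eq_one]
    congr 1
    simpa [vecMul, dotProduct, zsmul_eq_mul, mul_comm, Units.smul_def] using (congrFun hw i).symm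

def gmtAffineRep (hw : w ᵥ* T.map Int.cast = (μ : K) • w) : GmT m T →* Equiv.Perm K :=
  PresentedGroup.toGroup (lift_gmtAffineGens_eq_one hw)

@[simp] lemma gmtAffineRep_gmtA (hw : w ᵥ* T.map Int.cast = (μ : K) • w) (i : Fin m) :
    gmtAffineRep hw (gmtA m T i) = Equiv.constVAdd K (w i) :=
  PresentedGroup.toGroup.of _

@[simp] lemma gmtAffineRep_gmtT (hw : w ᵥ* T.map Int.cast = (μ : K) • w) :
    gmtAffineRep hw (gmtT m T) = MulAction.toPerm μ :=
  PresentedGroup.toGroup.of _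

end AffineRepresentation

lemma gmtA_mem_gmtElliptic {m : ℕ} (T : Matrix (Fin m) (Fin m) ℤ) (i : Fin m) :
    gmtA m T i ∈ gmtElliptic m T :=
  PresentedGroup.toGroup.of (gmtTauAux m T)

lemma finite_range_gmtA_union_gmtT (m : ℕ) (T : Matrix (Fin m) (Fin m) ℤ) :
    (Set.range (gmtA m T) ∪ {gmtT m T}).Finite :=
  (Set.finite_range _).union (Set.finite_singleton _)

section OfDigits

variable {m : ℕ} (T : Matrix (Fin m) (Fin m) ℤ) (j : Fin m) (s : ℕ)

def gmtOfDigits : List Bool → GmT m T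
  | [] => 1
  | b :: bs => gmtA m T j ^ b.toNat * (gmtT m T ^ s * gmtOfDigits bs * (gmtT m T ^ s)⁻¹)

lemma gmtOfDigits_mem_gmtElliptic (bs : List Bool) : gmtOfDigits T j s bs ∈ gmtElliptic m T := by
  induction bs with
  | nil => exact one_mem _
  | cons b bs ih =>
    exact mul_mem (pow_mem (gmtA_mem_gmtElliptic T j) _)
      ((MonoidHom.normal_ker _).conj_mem _ ih _)

lemma gmtOfDigits_mem_wordBall (bs : List Bool) :
    gmtOfDigits T j s bs ∈
      wordBall (Set.range (gmtA m T) ∪ {gmtT m T}) ((2 * s + 1) * bs.length) := by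
  set X := Set.range (gmtA m T) ∪ {gmtT m T}
  have ha (b : Bool) : gmtA m T j ^ b.toNat ∈ wordBall X 1 :=
    wordBall_mono (by simpa using Bool.toNat_le b)
      (pow_mem_wordBall (mem_wordBall_one (Y := X) (Or.inl ⟨j, rfl⟩)) _)
  have ht : gmtT m T ^ s ∈ wordBall X s := by
    simpa using pow_mem_wordBall (mem_wordBall_one (Y := X) (Or.inr rfl)) s
  induction bs with
  | nil => exact one_mem_wordBall _
  | cons b bs ih =>
    refine wordBall_mono ?_ (mul_mem_wordBall (ha b)
      (mul_mem_wordBall (mul_mem_wordBall ht ih) (inv_mem_wordBall ht)))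
    simp only [List.length_cons]
    ring_nf
    omega

variable {T}

lemma gmtAffineRep_gmtOfDigits {K : Type*} [CommRing K] {w : Fin m → K} {μ : Kˣ}
    (hw : w ᵥ* T.map Int.cast = (μ : K) • w) (bs : List Bool) :
    gmtAffineRep hw (gmtOfDigits T j s bs) =
      Equiv.constVAdd K (Nat.ofDigits ((μ : K) ^ s) (bs.map Bool.toNat) * w j) := by
  induction bs with
  | nil => simp [gmtOfDigits, Nat.ofDigits]
  | cons b bs ih =>
    simp only [gmtOfDigits, map_mul, map_pow, map_inv, gmtAffineRep_gmtA, gmtAffineRep_gmtT, ih]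
    rw [Equiv.constVAdd_pow, MulAction.toPerm_pow, MulAction.toPerm_mul_constVAdd_mul_inv,
      ← Equiv.constVAdd_add]
    congr 1
    simp only [List.map_cons, Nat.ofDigits, nsmul_eq_mul, Units.smul_def, Units.val_pow_eq_pow_val]
    ring

variable {K : Type*} [NormedField K] {w : Fin m → K} {μ : Kˣ}

lemma gmtOfDigits_injective (hw : w ᵥ* T.map Int.cast = (μ : K) • w) (hwj : w j ≠ 0)
    (hμ : 2 ≤ ‖(μ : K) ^ s‖) {bs cs : List Bool} (hlen : bs.length = cs.length)
    (h : gmtOfDigits T j s bs = gmtOfDigits T j s cs) : bs = cs := by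
  have h0 := congrArg (fun g => gmtAffineRep hw g 0) h
  simp only [gmtAffineRep_gmtOfDigits, Equiv.coe_constVAdd, vadd_eq_add, add_zero] at h0
  exact ofDigits_map_toNat_injective hμ hlen (mul_right_cancel₀ hwj h0)

lemma two_pow_le_ncard_gmtElliptic_inter_wordBall (hw : w ᵥ* T.map Int.cast = (μ : K) • w)
    (hwj : w j ≠ 0) (hμ : 2 ≤ ‖(μ : K) ^ s‖) (k : ℕ) :
    2 ^ k ≤ ((gmtElliptic m T : Set (GmT m T)) ∩
      wordBall (Set.range (gmtA m T) ∪ {gmtT m T}) ((2 * s + 1) * k)).ncard := by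
  have hinj : Function.Injective fun ε : Fin k → Bool => gmtOfDigits T j s (List.ofFn ε) :=
    fun ε ε' h => List.ofFn_injective (gmtOfDigits_injective j s hw hwj hμ (by simp) h)
  calc 2 ^ k = (Set.range fun ε : Fin k → Bool => gmtOfDigits T j s (List.ofFn ε)).ncard := by
        simp [Set.ncard_range_of_injective hinj]
    _ ≤ _ := by
      refine Set.ncard_le_ncard ?_
        ((wordBall_finite (finite_range_gmtA_union_gmtT m T) _).subset Set.inter_subset_right)
      rintro _ ⟨ε, rfl⟩
      exact ⟨gmtOfDigits_mem_gmtElliptic T j s _,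
        by simpa using gmtOfDigits_mem_wordBall T j s (List.ofFn ε)⟩

end OfDigits

lemma one_le_norm_det_map_intCast {n : Type*} [Fintype n] [DecidableEq n] {T : Matrix n n ℤ}
    (hdet : T.det ≠ 0) : 1 ≤ ‖(T.map (Int.cast : ℤ → ℂ)).det‖ := by
  rw [show (T.map (Int.cast : ℤ → ℂ)).det = T.det from
    (RingHom.map_det (Int.castRingHom ℂ) T).symm, Complex.norm_intCast]
  exact_mod_cast Int.one_le_abs hdet

/-- If `T` has an eigenvalue of absolute value `≠ 1` (and `det T ≠ 0`), then the elliptic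
subgroup `A(m,T) = ker τ` has exponential growth in `G(m,T)` with respect to the standard
generating set `X = {a₁,…,a_m,t}`: there is `α > 1` with `|A ∩ B_X(n)| ≥ αⁿ` for all
sufficiently large `n`. -/
theorem stmt8 (m : ℕ) (T : Matrix (Fin m) (Fin m) ℤ) (hdet : T.det ≠ 0)
    (hev : ∃ z ∈ (Matrix.charpoly (T.map (Int.cast : ℤ → ℂ))).roots, ‖z‖ ≠ 1) :
    ∃ α : ℝ, 1 < α ∧ ∃ N : ℕ, ∀ n ≥ N,
      α ^ n ≤ ((((gmtElliptic m T : Set (GmT m T)) ∩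
        wordBall (Set.range (gmtA m T) ∪ {gmtT m T}) n)).ncard : ℝ) := by
  obtain ⟨z, hroot, hz⟩ :=
    exists_one_lt_norm_mem_roots_charpoly (one_le_norm_det_map_intCast hdet) hev
  obtain ⟨w, hw0, hw⟩ := exists_vecMul_eq_smul_of_mem_roots_charpoly hroot
  obtain ⟨j, hwj⟩ := Function.ne_iff.mp hw0
  obtain ⟨s, hs⟩ := pow_unbounded_of_one_lt 2 hz
  let μ : ℂˣ := Units.mk0 z (norm_pos_iff.mp (one_pos.trans hz))
  have hμ : 2 ≤ ‖(μ : ℂ) ^ s‖ := by simpa [μ] using hs.le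
  exact exists_one_lt_pow_le_of_two_pow_le
    (monotone_ncard_inter_wordBall _ (finite_range_gmtA_union_gmtT m T))
    (Nat.succ_pos _) (two_pow_le_ncard_gmtElliptic_inter_wordBall j s (μ := μ) hw hwj hμ)
end
end

section
/- Let G = G(m,T) with T invertible over ℚ, let g = t^{−r} a^u t^s and h = t^{−r₀} a^{u₀} t^{s₀} be elements of G with r,s,r₀,s₀ ≥ 0 and u, u₀ ∈ ℤ^m. Then the commutator satisfies [g,h] = t^{−s−s₀} a^{−T^{s₀}u − T^{r}u₀ + T^{r₀}u + T^{s}u₀} t^{s+s₀}, where the exponent is computed in ℚ^m via the embedding φ of the elliptic subgroup. -/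
noncomputable section

section Aux
variable {m : ℕ} {T : Matrix (Fin m) (Fin m) ℤ}

lemma gmt_rel_eq_one {r : FreeGroup (Fin m ⊕ Unit)} (hr : r ∈ gmtRels m T) :
    (PresentedGroup.mk (gmtRels m T) r : GmT m T) = 1 :=
  (QuotientGroup.eq_one_iff r).mpr (Subgroup.subset_normalClosure hr)

lemma gmtA_comm (i j : Fin m) : Commute (gmtA m T i) (gmtA m T j) := by
  have h := gmt_rel_eq_one (T := T) (Or.inl ⟨i, j, rfl⟩)
  simp only [map_mul, map_inv] at h
  exact mul_inv_eq_iff_eq_mul.mp (mul_inv_eq_one.mp h)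

lemma gmt_t_a (i : Fin m) :
    gmtT m T * gmtA m T i * (gmtT m T)⁻¹ = gmtAProd m T (fun j => T j i) := by
  have h := gmt_rel_eq_one (T := T) (Or.inr ⟨i, rfl⟩)
  simp only [map_mul, map_inv, map_list_prod, List.map_ofFn, Function.comp_def, map_zpow] at h
  exact mul_inv_eq_one.mp h

lemma prod_pow_add {G : Type*} [Group G] :
    ∀ {n : ℕ} (g : Fin n → G), (∀ i j, Commute (g i) (g j)) → ∀ u v : Fin n → ℤ,
      (List.ofFn fun i => g i ^ (u i + v i)).prod =
        (List.ofFn fun i => g i ^ u i).prod * (List.ofFn fun i => g i ^ v i).prod := by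
  intro n
  induction n with
  | zero => intro g hc u v; simp
  | succ n ih =>
    intro g hc u v
    simp only [List.ofFn_succ, List.prod_cons]
    rw [ih (fun i => g i.succ) (fun i j => hc i.succ j.succ) (fun i => u i.succ)
      (fun i => v i.succ)]
    rw [zpow_add]
    have hcomm : Commute (g 0 ^ v 0) (List.ofFn fun i => g i.succ ^ u i.succ).prod := by
      apply Commute.list_prod_right
      intro x hx
      simp only [List.mem_ofFn] at hx
      obtain ⟨i, rfl⟩ := hx
      exact (hc 0 i.succ).zpow_zpow _ _
    rw [mul_assoc, ← mul_assoc (g 0 ^ v 0), hcomm.eq]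
    group

lemma gmtAProd_add (u v : Fin m → ℤ) :
    gmtAProd m T (u + v) = gmtAProd m T u * gmtAProd m T v :=
  prod_pow_add _ (fun i j => gmtA_comm i j) u v

/-- `gmtAProd` as a monoid hom from `Multiplicative (Fin m → ℤ)`. -/
def gmtAHom (m : ℕ) (T : Matrix (Fin m) (Fin m) ℤ) :
    Multiplicative (Fin m → ℤ) →* GmT m T :=
  MonoidHom.mk' (fun u => gmtAProd m T (Multiplicative.toAdd u))
    (fun _ _ => gmtAProd_add _ _)

lemma gmtAHom_apply (u : Fin m → ℤ) :
    gmtAHom m T (Multiplicative.ofAdd u) = gmtAProd m T u := rfl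

lemma gmtAProd_neg (u : Fin m → ℤ) :
    gmtAProd m T (-u) = (gmtAProd m T u)⁻¹ := by
  rw [← gmtAHom_apply, ← gmtAHom_apply, ← map_inv]
  rfl

lemma gmtAProd_zsmul (k : ℤ) (u : Fin m → ℤ) :
    gmtAProd m T (k • u) = gmtAProd m T u ^ k := by
  rw [← gmtAHom_apply, ← gmtAHom_apply, ← map_zpow]
  rfl

lemma gmt_t_conj (u : Fin m → ℤ) :
    gmtT m T * gmtAProd m T u * (gmtT m T)⁻¹ = gmtAProd m T (T.mulVec u) := by
  have conj : ∀ x : GmT m T, gmtT m T * x * (gmtT m T)⁻¹ = (MulAut.conj (gmtT m T)) x :=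
    fun x => rfl
  rw [conj]
  have h0 : gmtAProd m T u = (List.ofFn fun i => gmtA m T i ^ u i).prod := rfl
  rw [h0, ← MulEquiv.coe_toMonoidHom, map_list_prod, List.map_ofFn]
  have heach : (((MulAut.conj (gmtT m T)).toMonoidHom : GmT m T → GmT m T) ∘
        fun i => gmtA m T i ^ u i) =
      fun i => gmtAHom m T (Multiplicative.ofAdd (u i • fun j => T j i)) := by
    funext i
    simp only [Function.comp_apply, MulEquiv.coe_toMonoidHom, map_zpow]
    have h1 : (MulAut.conj (gmtT m T)) (gmtA m T i) = gmtAProd m T (fun j => T j i) :=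
      gmt_t_a i
    rw [h1, gmtAHom_apply, gmtAProd_zsmul]
  rw [heach]
  calc (List.ofFn fun i => gmtAHom m T (Multiplicative.ofAdd (u i • fun j => T j i))).prod
      = ((List.ofFn fun i => Multiplicative.ofAdd (u i • fun j => T j i)).map
          (gmtAHom m T)).prod := by rw [List.map_ofFn]; rfl
    _ = gmtAHom m T (List.ofFn fun i => Multiplicative.ofAdd (u i • fun j => T j i)).prod :=
        (map_list_prod _ _).symm
    _ = gmtAProd m T (T.mulVec u) := by
        rw [← gmtAHom_apply]
        congr 1
        rw [List.prod_ofFn, ← ofAdd_sum]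
        congr 1
        funext j
        simp [Matrix.mulVec, dotProduct, Finset.sum_apply, mul_comm]

lemma gmt_tpow_conj (k : ℕ) (u : Fin m → ℤ) :
    gmtT m T ^ k * gmtAProd m T u * (gmtT m T ^ k)⁻¹ = gmtAProd m T ((T ^ k).mulVec u) := by
  induction k generalizing u with
  | zero => simp
  | succ k ih =>
    rw [pow_succ]
    calc gmtT m T ^ k * gmtT m T * gmtAProd m T u * (gmtT m T ^ k * gmtT m T)⁻¹
        = gmtT m T ^ k * (gmtT m T * gmtAProd m T u * (gmtT m T)⁻¹) * (gmtT m T ^ k)⁻¹ := by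
          group
      _ = gmtAProd m T ((T ^ (k + 1)).mulVec u) := by
          rw [gmt_t_conj, ih, Matrix.mulVec_mulVec, ← pow_succ]

/-- Shift a normal form: absorb `k` extra powers of `t`. -/
lemma gmt_shift (k a b : ℕ) (u : Fin m → ℤ) :
    (gmtT m T ^ a)⁻¹ * gmtAProd m T u * gmtT m T ^ b =
      (gmtT m T ^ (a + k))⁻¹ * gmtAProd m T ((T ^ k).mulVec u) * gmtT m T ^ (b + k) := by
  rw [← gmt_tpow_conj k u, pow_add, pow_add]
  group

/-- Product of two normal forms. -/
lemma gmt_mul_form (a b c d : ℕ) (u v : Fin m → ℤ) :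
    ((gmtT m T ^ a)⁻¹ * gmtAProd m T u * gmtT m T ^ b) *
      ((gmtT m T ^ c)⁻¹ * gmtAProd m T v * gmtT m T ^ d) =
      (gmtT m T ^ (a + c))⁻¹ *
        gmtAProd m T ((T ^ c).mulVec u + (T ^ b).mulVec v) * gmtT m T ^ (b + d) := by
  rw [gmtAProd_add, ← gmt_tpow_conj c u, ← gmt_tpow_conj b v, pow_add, pow_add]
  group

/-- Inverse of a normal form. -/
lemma gmt_inv_form (a b : ℕ) (u : Fin m → ℤ) :
    ((gmtT m T ^ a)⁻¹ * gmtAProd m T u * gmtT m T ^ b)⁻¹ =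
      (gmtT m T ^ b)⁻¹ * gmtAProd m T (-u) * gmtT m T ^ a := by
  rw [gmtAProd_neg]
  group

end Aux

/-- Commutator formula in `G(m,T)`: for `g = t^{−r} a^u t^s` and `h = t^{−r₀} a^{u₀} t^{s₀}`,
`[g,h] = g⁻¹h⁻¹gh = t^{−s−s₀} a^{−T^{s₀}u − T^{r}u₀ + T^{r₀}u + T^{s}u₀} t^{s+s₀}`. -/
theorem stmt17 (m : ℕ) (T : Matrix (Fin m) (Fin m) ℤ) (hdet : T.det ≠ 0)
    (r s r₀ s₀ : ℕ) (u u₀ : Fin m → ℤ)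
    (g h : GmT m T)
    (hg : g = gmtT m T ^ (-(r : ℤ)) * gmtAProd m T u * gmtT m T ^ (s : ℤ))
    (hh : h = gmtT m T ^ (-(r₀ : ℤ)) * gmtAProd m T u₀ * gmtT m T ^ (s₀ : ℤ)) :
    g⁻¹ * h⁻¹ * g * h =
      gmtT m T ^ (-((s : ℤ) + s₀)) *
        gmtAProd m T
          (-(T ^ s₀).mulVec u - (T ^ r).mulVec u₀ + (T ^ r₀).mulVec u + (T ^ s).mulVec u₀) *
        gmtT m T ^ ((s : ℤ) + s₀) := by
  subst hg hh
  have hc : ((s : ℤ) + s₀) = ((s + s₀ : ℕ) : ℤ) := by push_cast; ring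
  rw [hc]
  simp only [zpow_neg, zpow_natCast]
  rw [gmt_inv_form, gmt_inv_form, gmt_mul_form, gmt_mul_form, gmt_mul_form,
    gmt_shift (r + r₀) (s + s₀) (s + s₀)]
  congr 2
  · rw [add_assoc]
  · congr 1
    simp only [Matrix.mulVec_add, Matrix.mulVec_neg, Matrix.mulVec_sub,
      Matrix.mulVec_mulVec, ← pow_add]
    have e1 : r₀ + (r + s₀) = r + r₀ + s₀ := by omega
    have e2 : r₀ + (r + r) = r + r₀ + r := by omega
    have e3 : r₀ + (r + r₀) = r + r₀ + r₀ := by omega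
    rw [e1, e2, e3, sub_eq_add_neg]
  · omega
end
end
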